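/- arXiv:2510.18780 — 7 statements merged into one kernel-verified Lean document; each statement's English description precedes it below -/
import Mathlib

section
/- For vectors x_1, …, x_m ∈ ℝ_+^d and p ∈ [1,∞), the absolute value of ‖x_1 ∨ ⋯ ∨ x_m‖_p^p − (‖x_1‖_p^p + ⋯ + ‖x_m‖_p^p) is at most m · max over 1 ≤ i < m of ‖(x_1 ∨ ⋯ ∨ x_i) ∧ (x_{i+1} ∨ ⋯ ∨ x_m)‖_p^p. -/
/-!
For two reals, `a ^ p + b ^ p = (a ⊔ b) ^ p + (a ⊓ b) ^ p`. Merging `x_0, …, x_{m-1}` one at a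
time into the running maximum `x_0 ∨ ⋯ ∨ x_l` therefore shows, coordinatewise, that
`∑ i ‖x_i‖_p^p − ‖x_0 ∨ ⋯ ∨ x_{m-1}‖_p^p` is exactly `∑_{l < m-1} ‖(x_0 ∨ ⋯ ∨ x_l) ∧ x_{l+1}‖_p^p`,
a sum of `m - 1` nonnegative terms. Since `x_{l+1} ≤ x_{l+1} ∨ ⋯ ∨ x_{m-1}` and `t ↦ t ^ p` is
monotone on `ℝ_+`, each term is bounded by the `l`-th split term of the right-hand side.
-/

open Finset

theorem apply_add_apply_eq_apply_max_add_apply_min {α M : Type*} [LinearOrder α] [AddCommMagma M]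
    (f : α → M) (a b : α) : f a + f b = f (max a b) + f (min a b) := by
  rcases le_total a b with h | h
  · rw [max_eq_right h, min_eq_left h, add_comm]
  · rw [max_eq_left h, min_eq_right h]

theorem sum_range_succ_eq_apply_partialSups_add {α M : Type*} [LinearOrder α] [AddCommMonoid M]
    (f : α → M) (x : ℕ → α) (n : ℕ) :
    ∑ i ∈ range (n + 1), f (x i) =
      f (partialSups x n) + ∑ l ∈ range n, f (min (partialSups x l) (x (l + 1))) := by
  induction n with
  | zero => simp
  | succ n ih =>
    rw [sum_range_succ, ih, sum_range_succ, partialSups_add_one, add_right_comm,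
      apply_add_apply_eq_apply_max_add_apply_min f, add_assoc]
    exact congrArg _ (add_comm _ _)

theorem ciSup_fin_succ_eq_partialSups {α : Type*} [ConditionallyCompleteLattice α]
    (f : ℕ → α) (n : ℕ) : ⨆ i : Fin (n + 1), f i = partialSups f n := by
  apply le_antisymm
  · exact ciSup_le fun i => le_partialSups_of_le f (Nat.lt_succ_iff.mp i.2)
  · rw [partialSups_eq_sup'_range]
    exact sup'_le _ _ fun i hi => Finite.le_ciSup_of_le ⟨i, mem_range.mp hi⟩ le_rfl

theorem sum_range_le_mul_ciSup (f : ℕ → ℝ) (n : ℕ) :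
    ∑ l ∈ range n, f l ≤ n * ⨆ l : Fin n, f l := by
  rw [← Fin.sum_univ_eq_sum_range]
  calc ∑ l : Fin n, f l ≤ ∑ _l : Fin n, ⨆ l : Fin n, f l :=
        sum_le_sum fun l _ => Finite.le_ciSup_of_le l le_rfl
    _ = n * ⨆ l : Fin n, f l := by simp

theorem sum_range_succ_sum_rpow_eq {ι : Type*} [Fintype ι] (x : ℕ → ι → ℝ) (p : ℝ) (n : ℕ) :
    ∑ i ∈ range (n + 1), ∑ j, x i j ^ p =
      ∑ j, (⨆ i : Fin (n + 1), x i j) ^ p +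
        ∑ l ∈ range n, ∑ j, min (⨆ i : Fin (l + 1), x i j) (x (l + 1) j) ^ p := by
  rw [sum_comm, sum_comm (s := range n), ← sum_add_distrib]
  refine sum_congr rfl fun j _ => ?_
  simp only [ciSup_fin_succ_eq_partialSups (fun i => x i j)]
  exact sum_range_succ_eq_apply_partialSups_add (· ^ p) (fun i => x i j) n

/-- For nonnegative vectors `x_1, …, x_m ∈ ℝ₊^d` and `p ∈ [1,∞)`,
`| ‖x_1 ∨ ⋯ ∨ x_m‖_p^p − ∑ i ‖x_i‖_p^p |` is at most
`m · max_{1 ≤ i < m} ‖(x_1 ∨ ⋯ ∨ x_i) ∧ (x_{i+1} ∨ ⋯ ∨ x_m)‖_p^p`.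
Vectors are indexed by `0, …, m-1`; the split index `l : Fin (m-1)` puts
`x_0, …, x_l` on the left and `x_{l+1}, …, x_{m-1}` on the right. -/
theorem stmt6 {d : ℕ} (m : ℕ) (hm : 1 ≤ m) (p : ℝ) (hp : 1 ≤ p)
    (x : ℕ → Fin d → ℝ) (hx : ∀ i j, 0 ≤ x i j) :
    |(∑ j, (⨆ i : Fin m, x i.1 j) ^ p) - ∑ i ∈ Finset.range m, ∑ j, x i j ^ p|
      ≤ m * ⨆ l : Fin (m - 1), ∑ j,
          (min (⨆ i : Fin (l.1 + 1), x i.1 j)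
               (⨆ i : Fin (m - (l.1 + 1)), x (l.1 + 1 + i.1) j)) ^ p := by
  obtain ⟨n, rfl⟩ : ∃ n, m = n + 1 := ⟨m - 1, by omega⟩
  have hp0 : 0 ≤ p := by linarith
  have hmax_nonneg : ∀ k (s : Fin k → ℕ) j, 0 ≤ ⨆ i, x (s i) j :=
    fun k s j => Real.iSup_nonneg fun i => hx _ j
  have hdefect : 0 ≤ ∑ l ∈ range n, ∑ j, min (⨆ i : Fin (l + 1), x i j) (x (l + 1) j) ^ p :=
    sum_nonneg fun l _ => sum_nonneg fun j _ =>
      Real.rpow_nonneg (le_min (hmax_nonneg _ _ j) (hx _ j)) p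
  rw [sum_range_succ_sum_rpow_eq, sub_add_cancel_left, abs_neg, abs_of_nonneg hdefect,
    Nat.add_sub_cancel]
  calc _ ≤ ∑ l ∈ range n, ∑ j, min (⨆ i : Fin (l + 1), x i.1 j)
          (⨆ i : Fin (n + 1 - (l + 1)), x (l + 1 + i.1) j) ^ p := by
        gcongr with l hl j
        · exact le_min (hmax_nonneg _ _ j) (hx _ j)
        · exact Finite.le_ciSup_of_le ⟨0, by have := mem_range.mp hl; omega⟩ le_rfl
    _ ≤ n * _ := sum_range_le_mul_ciSup _ n
    _ ≤ ((n + 1 : ℕ) : ℝ) * _ := by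
        gcongr
        · exact Real.iSup_nonneg fun l => sum_nonneg fun j _ =>
            Real.rpow_nonneg (le_min (hmax_nonneg _ _ j) (hmax_nonneg _ _ j)) p
        · exact_mod_cast n.le_succ
end

section
/- For real numbers x_1, …, x_m, the value | |x_1 + ⋯ + x_m| − (|x_1| + ⋯ + |x_m|) | is at most 2m times the second largest value among |x_1|, …, |x_m| (interpreted as 0 if m = 1). -/
/-!
By the triangle inequality `‖f i‖ ≤ ‖∑ j, f j‖ + ∑ j ≠ i, ‖f j‖` for any single index `i`, so the
defect `∑ ‖f j‖ - ‖∑ f j‖` is at most twice the sum of the norms of the other terms. Choosing `i`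
where `|x i|` is largest, each of the other `m - 1` terms is at most the second largest value.
-/
open scoped BigOperators

/-- The second largest value among `a 0, …, a (m-1)`, expressed as the supremum of
`min (a i) (a j)` over pairs `i ≠ j` (this equals the second order statistic;
it is `sSup ∅ = 0` when `m ≤ 1`). -/
noncomputable def secondMax {m : ℕ} (a : Fin m → ℝ) : ℝ :=
  sSup {v | ∃ i j : Fin m, i ≠ j ∧ v = min (a i) (a j)}

open Finset

theorem sum_norm_sub_norm_sum_le_two_mul_sum_erase {ι E : Type*} [SeminormedAddCommGroup E]
    [DecidableEq ι] (s : Finset ι) (f : ι → E) {i : ι} (hi : i ∈ s) :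
    ∑ j ∈ s, ‖f j‖ - ‖∑ j ∈ s, f j‖ ≤ 2 * ∑ j ∈ s.erase i, ‖f j‖ := by
  have hsplit_norm := add_sum_erase s (fun j => ‖f j‖) hi
  have hsplit := add_sum_erase s f hi
  have hfi : ‖f i‖ ≤ ‖∑ j ∈ s, f j‖ + ∑ j ∈ s.erase i, ‖f j‖ :=
    calc ‖f i‖ = ‖∑ j ∈ s, f j - ∑ j ∈ s.erase i, f j‖ := by rw [← hsplit, add_sub_cancel_right]
      _ ≤ ‖∑ j ∈ s, f j‖ + ‖∑ j ∈ s.erase i, f j‖ := norm_sub_le _ _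
      _ ≤ ‖∑ j ∈ s, f j‖ + ∑ j ∈ s.erase i, ‖f j‖ := by gcongr; exact norm_sum_le _ _
  linarith

theorem bddAbove_setOf_min_of_ne {m : ℕ} (a : Fin m → ℝ) :
    BddAbove {v | ∃ i j : Fin m, i ≠ j ∧ v = min (a i) (a j)} :=
  ((Set.finite_range fun p : Fin m × Fin m => min (a p.1) (a p.2)).subset
    (by rintro v ⟨i, j, -, rfl⟩; exact ⟨(i, j), rfl⟩)).bddAbove

theorem le_secondMax_of_le {m : ℕ} {a : Fin m → ℝ} {i j : Fin m} (hij : i ≠ j)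
    (hle : a j ≤ a i) : a j ≤ secondMax a :=
  le_csSup (bddAbove_setOf_min_of_ne a) ⟨i, j, hij, (min_eq_right hle).symm⟩

theorem secondMax_nonneg {m : ℕ} {a : Fin m → ℝ} (ha : ∀ i, 0 ≤ a i) : 0 ≤ secondMax a :=
  Real.sSup_nonneg fun _ ⟨i, j, _, hv⟩ => hv ▸ le_min (ha i) (ha j)

theorem sum_erase_le_card_mul_secondMax {m : ℕ} {a : Fin m → ℝ} (ha : ∀ i, 0 ≤ a i)
    {i₀ : Fin m} (hmax : ∀ j, a j ≤ a i₀) : ∑ j ∈ univ.erase i₀, a j ≤ m * secondMax a :=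
  calc ∑ j ∈ univ.erase i₀, a j ≤ ∑ _j ∈ univ.erase i₀, secondMax a :=
        sum_le_sum fun j hj => le_secondMax_of_le (ne_of_mem_erase hj).symm (hmax j)
    _ ≤ ∑ _j : Fin m, secondMax a :=
        sum_le_sum_of_subset_of_nonneg (erase_subset _ _) fun _ _ _ => secondMax_nonneg ha
    _ = m * secondMax a := by simp

/-- For reals `x_1, …, x_m`, `| |x_1 + ⋯ + x_m| − (|x_1| + ⋯ + |x_m|) |` is at most
`2m` times the second largest value among `|x_1|, …, |x_m|`. -/
theorem stmt8 (m : ℕ) (x : Fin m → ℝ) :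
    |(|∑ i, x i|) - (∑ i, |x i|)| ≤ 2 * m * secondMax (fun i => |x i|) := by
  rcases isEmpty_or_nonempty (Fin m) with _ | _
  · simpa using mul_nonneg (by positivity : (0 : ℝ) ≤ 2 * m)
      (secondMax_nonneg fun i => abs_nonneg (x i))
  obtain ⟨i₀, hmax⟩ := Finite.exists_max fun i => |x i|
  rw [abs_sub_comm, abs_of_nonneg (sub_nonneg.2 (abs_sum_le_sum_abs _ _))]
  calc ∑ i, |x i| - |∑ i, x i| ≤ 2 * ∑ j ∈ univ.erase i₀, |x j| := by
        simpa only [Real.norm_eq_abs] using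
          sum_norm_sub_norm_sum_le_two_mul_sum_erase univ x (mem_univ i₀)
    _ ≤ 2 * (m * secondMax fun i => |x i|) := by
        gcongr; exact sum_erase_le_card_mul_secondMax (fun i => abs_nonneg (x i)) hmax
    _ = 2 * m * secondMax fun i => |x i| := by ring
end

section
/- For vectors x_1, …, x_m ∈ ℝ^d, the difference | max_{1≤k≤d} |x_{1k} + ⋯ + x_{mk}| − max_{1≤k≤d} max_{1≤i≤m} |x_{ik}| | is at most m · max_{1≤i<j≤m} ‖|x_i| ∧ |x_j|‖_∞, where |x_i| is the vector of absolute values of the components of x_i. -/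
/-!
Fix a coordinate `k` and let `i₀` maximise `|x i k|`. For every other `i`, `|x i k|` is the
overlap `min |x i k| |x i₀ k|`, hence at most the largest pairwise overlap `S`, so the
triangle inequality puts `|∑ i, x i k|` within `(m - 1) S` of `|x i₀ k| = max_i |x i k|`.
Taking the maximum over `k` is `1`-Lipschitz for the sup distance.
-/

open Finset

theorem abs_norm_sum_sub_norm_le {ι E : Type*} [DecidableEq ι] [SeminormedAddCommGroup E]
    {s : Finset ι} {a : ι} (ha : a ∈ s) (y : ι → E) :
    |‖∑ i ∈ s, y i‖ - ‖y a‖| ≤ ∑ i ∈ s.erase a, ‖y i‖ :=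
  calc |‖∑ i ∈ s, y i‖ - ‖y a‖| ≤ ‖∑ i ∈ s, y i - y a‖ := abs_norm_sub_norm_le _ _
    _ = ‖∑ i ∈ s.erase a, y i‖ := by rw [sum_erase_eq_sub ha]
    _ ≤ ∑ i ∈ s.erase a, ‖y i‖ := norm_sum_le _ _

theorem abs_abs_sum_sub_iSup_abs_le {ι : Type*} [Fintype ι] (y : ι → ℝ) {S : ℝ} (hS₀ : 0 ≤ S)
    (hS : ∀ i j, i ≠ j → min |y i| |y j| ≤ S) :
    |(|∑ i, y i|) - (⨆ i, |y i|)| ≤ Fintype.card ι * S := by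
  classical
  cases isEmpty_or_nonempty ι
  · simp
  obtain ⟨i₀, hi₀⟩ := Finite.exists_max fun i => |y i|
  have hsup : ⨆ i, |y i| = |y i₀| :=
    le_antisymm (ciSup_le hi₀) (le_ciSup (f := fun i => |y i|) (Finite.bddAbove_range _) i₀)
  have hrest : ∀ i ∈ univ.erase i₀, |y i| ≤ S := fun i hi => by
    simpa [min_eq_left (hi₀ i)] using hS i i₀ (ne_of_mem_erase hi)
  calc |(|∑ i, y i|) - (⨆ i, |y i|)| ≤ ∑ i ∈ univ.erase i₀, |y i| := by
        rw [hsup]; exact abs_norm_sum_sub_norm_le (mem_univ i₀) y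
    _ ≤ #(univ.erase i₀) • S := sum_le_card_nsmul _ _ _ hrest
    _ ≤ Fintype.card ι * S := by
        rw [nsmul_eq_mul, ← card_univ]
        gcongr
        exact erase_subset _ _

theorem Real.abs_iSup_sub_iSup_le {ι : Type*} [Finite ι] {f g : ι → ℝ} {c : ℝ} (hc : 0 ≤ c)
    (h : ∀ i, |f i - g i| ≤ c) : |(⨆ i, f i) - ⨆ i, g i| ≤ c := by
  cases isEmpty_or_nonempty ι
  · simpa [Real.iSup_of_isEmpty] using hc
  have half : ∀ f g : ι → ℝ, (∀ i, f i - g i ≤ c) → (⨆ i, f i) - ⨆ i, g i ≤ c :=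
    fun f g h => sub_le_iff_le_add.2 <| ciSup_le fun i =>
      (sub_le_iff_le_add.1 (h i)).trans (add_le_add_right (le_ciSup (Finite.bddAbove_range g) i) c)
  exact abs_sub_le_iff.2 ⟨half f g fun i => (abs_sub_le_iff.1 (h i)).1,
    half g f fun i => (abs_sub_le_iff.1 (h i)).2⟩

/-- For vectors `x_1, …, x_m ∈ ℝ^d`,
`| max_k |∑ i x_{ik}| − max_k max_i |x_{ik}| | ≤ m · max_{i ≠ j} ‖ |x_i| ∧ |x_j| ‖_∞`. -/
theorem stmt9 {d : ℕ} (m : ℕ) (x : Fin m → Fin d → ℝ) :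
    |(⨆ k : Fin d, |∑ i, x i k|) - (⨆ k : Fin d, ⨆ i, |x i k|)|
      ≤ m * sSup {v | ∃ i j : Fin m, i ≠ j ∧ v = ⨆ k : Fin d, min |x i k| |x j k|} := by
  set overlap : Fin m → Fin m → ℝ := fun i j => ⨆ k : Fin d, min |x i k| |x j k|
  set S := sSup {v | ∃ i j : Fin m, i ≠ j ∧ v = overlap i j}
  have hbdd : BddAbove {v | ∃ i j : Fin m, i ≠ j ∧ v = overlap i j} :=
    ((Set.finite_range fun p : Fin m × Fin m => overlap p.1 p.2).subset
      (by rintro _ ⟨i, j, -, rfl⟩; exact ⟨(i, j), rfl⟩)).bddAbove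
  have hS₀ : 0 ≤ S := Real.sSup_nonneg <| by
    rintro _ ⟨i, j, -, rfl⟩
    exact Real.iSup_nonneg fun k => le_min (abs_nonneg _) (abs_nonneg _)
  have hS : ∀ k i j, i ≠ j → min |x i k| |x j k| ≤ S := fun k i j hij =>
    (le_ciSup (Finite.bddAbove_range _) k).trans (le_csSup hbdd ⟨i, j, hij, rfl⟩)
  refine Real.abs_iSup_sub_iSup_le (by positivity) fun k => ?_
  simpa using abs_abs_sum_sub_iSup_abs_le (x · k) hS₀ (hS k)
end

section
/- For p ∈ (1,∞) and real numbers x_1, …, x_m, the absolute value of |x_1 + ⋯ + x_m|^p − (|x_1|^p + ⋯ + |x_m|^p) is at most c · max_{1 ≤ i ≠ j ≤ m} |x_i| · |x_j|^{p−1} for a constant c > 0 depending only on m and p. -/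
/-!
Let `x k` have the largest modulus `a`. Then `|∑ x|` and `a` differ by at most `∑_{i ≠ k} |x i|`
and both are at most `m a`, so the mean value bound for `t ↦ t ^ p` controls `|∑ x| ^ p - a ^ p` by
`p (m a) ^ (p - 1) ∑_{i ≠ k} |x i|`, a sum of `m - 1` mixed terms `|x i| a ^ (p - 1)`. The other
powers `|x i| ^ p ≤ a |x i| ^ (p - 1)`, `i ≠ k`, are mixed terms as well.
-/

open Finset

lemma Real.rpow_sub_rpow_le_mul_sub {p a b : ℝ} (hp : 1 ≤ p) (hb : 0 ≤ b) (hba : b ≤ a) :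
    a ^ p - b ^ p ≤ p * a ^ (p - 1) * (a - b) := by
  rcases hba.eq_or_lt with rfl | hlt
  · simp
  have hslope := (convexOn_rpow hp).slope_le_of_hasDerivAt hb (hb.trans hlt.le) hlt
    (Real.hasDerivAt_rpow_const (Or.inr hp))
  rwa [slope_def_field, div_le_iff₀ (sub_pos.2 hlt)] at hslope

lemma Real.abs_rpow_sub_rpow_le {p a b : ℝ} (hp : 1 ≤ p) (ha : 0 ≤ a) (hb : 0 ≤ b) :
    |a ^ p - b ^ p| ≤ p * max a b ^ (p - 1) * |a - b| := by
  have hp0 : 0 ≤ p := zero_le_one.trans hp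
  rcases le_total b a with h | h
  · rw [abs_of_nonneg (sub_nonneg.2 (Real.rpow_le_rpow hb h hp0)), abs_of_nonneg (sub_nonneg.2 h),
      max_eq_left h]
    exact Real.rpow_sub_rpow_le_mul_sub hp hb h
  · rw [abs_sub_comm, abs_of_nonneg (sub_nonneg.2 (Real.rpow_le_rpow ha h hp0)), abs_sub_comm,
      abs_of_nonneg (sub_nonneg.2 h), max_eq_right h]
    exact Real.rpow_sub_rpow_le_mul_sub hp ha h

lemma Real.rpow_le_mul_rpow_sub_one {p a t : ℝ} (hp : 1 ≤ p) (ht : 0 ≤ t) (hta : t ≤ a) :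
    t ^ p ≤ a * t ^ (p - 1) := by
  calc t ^ p = t * t ^ (p - 1) := by
        rw [← Real.rpow_one_add' ht (by linarith), add_sub_cancel]
    _ ≤ a * t ^ (p - 1) := by gcongr

lemma abs_abs_sum_rpow_sub_sum_rpow_le {ι : Type*} [Fintype ι] {p M : ℝ} (hp : 1 ≤ p)
    (x : ι → ℝ) {k : ι} (hk : ∀ i, |x i| ≤ |x k|)
    (hM : ∀ i j, i ≠ j → |x i| * |x j| ^ (p - 1) ≤ M) :
    |(|∑ i, x i|) ^ p - ∑ i, |x i| ^ p|
      ≤ (Fintype.card ι - 1) * (p * (Fintype.card ι : ℝ) ^ (p - 1) + 1) * M := by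
  classical
  set n : ℝ := (Fintype.card ι : ℝ)
  set a := |x k|
  have : Nonempty ι := ⟨k⟩
  have hcard : ((univ.erase k).card : ℝ) = n - 1 := by
    rw [card_erase_of_mem (mem_univ k), card_univ, Nat.cast_pred Fintype.card_pos]
  have hn : 1 ≤ n := Nat.one_le_cast.2 Fintype.card_pos
  have hcross : ∑ i ∈ univ.erase k, |x i| * a ^ (p - 1) ≤ (n - 1) * M := by
    rw [← hcard, ← nsmul_eq_mul]
    exact sum_le_card_nsmul _ _ _ fun i hi ↦ hM i k (ne_of_mem_erase hi)
  have htail : ∑ i ∈ univ.erase k, |x i| ^ p ≤ (n - 1) * M := by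
    rw [← hcard, ← nsmul_eq_mul]
    refine sum_le_card_nsmul _ _ _ fun i hi ↦ ?_
    exact (Real.rpow_le_mul_rpow_sub_one hp (abs_nonneg _) (hk i)).trans
      (hM k i (ne_of_mem_erase hi).symm)
  have hdev : |(|∑ i, x i|) - a| ≤ ∑ i ∈ univ.erase k, |x i| := by
    refine (abs_abs_sub_abs_le_abs_sub _ _).trans ?_
    rw [← sum_erase_add _ _ (mem_univ k), add_sub_cancel_right]
    exact abs_sum_le_sum_abs _ _
  have hmax : max |∑ i, x i| a ≤ n * a := by
    refine max_le ?_ (le_mul_of_one_le_left (abs_nonneg _) hn)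
    calc |∑ i, x i| ≤ ∑ i, |x i| := abs_sum_le_sum_abs _ _
      _ ≤ n * a := by
        simpa [n] using sum_le_card_nsmul univ (fun i ↦ |x i|) a fun i _ ↦ hk i
  have hhead : |(|∑ i, x i|) ^ p - a ^ p| ≤ p * n ^ (p - 1) * ((n - 1) * M) :=
    calc |(|∑ i, x i|) ^ p - a ^ p|
        ≤ p * max |∑ i, x i| a ^ (p - 1) * |(|∑ i, x i|) - a| :=
          Real.abs_rpow_sub_rpow_le hp (abs_nonneg _) (abs_nonneg _)
      _ ≤ p * (n * a) ^ (p - 1) * ∑ i ∈ univ.erase k, |x i| := by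
          gcongr
      _ = p * n ^ (p - 1) * ∑ i ∈ univ.erase k, |x i| * a ^ (p - 1) := by
          rw [Real.mul_rpow (by linarith) (abs_nonneg _), ← sum_mul]; ring
      _ ≤ p * n ^ (p - 1) * ((n - 1) * M) := by gcongr
  calc |(|∑ i, x i|) ^ p - ∑ i, |x i| ^ p|
      = |((|∑ i, x i|) ^ p - a ^ p) - ∑ i ∈ univ.erase k, |x i| ^ p| := by
        rw [← add_sum_erase univ (fun i ↦ |x i| ^ p) (mem_univ k), sub_add_eq_sub_sub]
    _ ≤ |(|∑ i, x i|) ^ p - a ^ p| + ∑ i ∈ univ.erase k, |x i| ^ p := by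
        refine (abs_sub _ _).trans_eq ?_
        rw [abs_of_nonneg (sum_nonneg fun i _ ↦ by positivity : 0 ≤ ∑ i ∈ univ.erase k, |x i| ^ p)]
    _ ≤ (n - 1) * (p * n ^ (p - 1) + 1) * M := by nlinarith

/-- For `p ∈ (1,∞)` and any `m`, there is a constant `c > 0` (depending only on `m` and `p`)
such that for all reals `x_1, …, x_m`,
`| |x_1 + ⋯ + x_m|^p − ∑ i |x_i|^p | ≤ c · max_{i ≠ j} |x_i| · |x_j|^{p−1}`. -/
theorem stmt10 (m : ℕ) (p : ℝ) (hp1 : 1 < p) :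
    ∃ c > (0 : ℝ), ∀ x : Fin m → ℝ,
      |(|∑ i, x i|) ^ p - ∑ i, |x i| ^ p|
        ≤ c * sSup {v | ∃ i j : Fin m, i ≠ j ∧ v = |x i| * |x j| ^ (p - 1)} := by
  refine ⟨max 1 ((m - 1) * (p * (m : ℝ) ^ (p - 1) + 1)), lt_max_of_lt_left one_pos, fun x ↦ ?_⟩
  set S := {v | ∃ i j : Fin m, i ≠ j ∧ v = |x i| * |x j| ^ (p - 1)}
  have hS : BddAbove S :=
    ((Set.finite_range fun q : Fin m × Fin m ↦ |x q.1| * |x q.2| ^ (p - 1)).subset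
      (by rintro v ⟨i, j, -, rfl⟩; exact ⟨(i, j), rfl⟩)).bddAbove
  have hS0 : 0 ≤ sSup S := Real.sSup_nonneg (by rintro v ⟨i, j, -, rfl⟩; positivity)
  rcases isEmpty_or_nonempty (Fin m) with hm | hm
  · simp only [univ_eq_empty, sum_empty, abs_zero, Real.zero_rpow (by linarith : p ≠ 0),
      sub_zero]
    positivity
  obtain ⟨k, -, hk⟩ := exists_max_image univ (fun i ↦ |x i|) univ_nonempty
  calc |(|∑ i, x i|) ^ p - ∑ i, |x i| ^ p|
      ≤ (m - 1) * (p * (m : ℝ) ^ (p - 1) + 1) * sSup S := by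
        simpa using abs_abs_sum_rpow_sub_sum_rpow_le hp1.le x (fun i ↦ hk i (mem_univ i))
          fun i j hij ↦ le_csSup hS ⟨i, j, hij, rfl⟩
    _ ≤ _ := by gcongr; exact le_max_right _ _
end

section
/- If η is a Fréchet(r) random variable with P(η ≤ u) = exp(−u^{−r}) for u > 0 and ζ is an independent nonnegative random variable with Laplace transform E[exp(−tζ)] = exp(−t^{1/r}) for t ≥ 0, and η_1, …, η_d are i.i.d. copies of η independent of ζ, then the random vector X = ζ^{1/r}(η_1, …, η_d) satisfies P(X ≤ u) = exp(−‖u^{−1}‖_r) for all u ∈ (0,∞)^d, where u^{−1} = (u_1^{−1}, …, u_d^{−1}) and ‖·‖_r is the ℓ_r norm. -/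
open MeasureTheory ProbabilityTheory
open scoped BigOperators

/-!
Given `ζ = s`, the events `{s^{1/r} η_i ≤ u_i}` are independent with probabilities
`exp(-s u_i^{-r})`, so the conditional probability of `X ≤ u` is `exp(-t s)` with
`t = ∑ u_i^{-r} = ‖u⁻¹‖_r^r`. Averaging over `ζ` yields its Laplace transform at `t`, which is
`exp(-t^{1/r}) = exp(-‖u⁻¹‖_r)`.
-/

open Real

section

variable {Ω α β : Type*} [MeasurableSpace Ω] [MeasurableSpace α] [MeasurableSpace β]
  {μ : Measure Ω}

theorem ProbabilityTheory.IndepFun.measure_prodMk_mem_eq_lintegral [IsFiniteMeasure μ]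
    {X : Ω → α} {Y : Ω → β} (hXY : IndepFun X Y μ) (hX : Measurable X) (hY : Measurable Y)
    {S : Set (α × β)} (hS : MeasurableSet S) :
    μ {ω | (X ω, Y ω) ∈ S} = ∫⁻ ω, μ {ω' | (X ω, Y ω') ∈ S} ∂μ := by
  change μ ((fun ω ↦ (X ω, Y ω)) ⁻¹' S) = _
  rw [← Measure.map_apply (hX.prodMk hY) hS,
    (indepFun_iff_map_prod_eq_prod_map_map hX.aemeasurable hY.aemeasurable).1 hXY,
    Measure.prod_apply hS, lintegral_map (measurable_measure_prodMk_left hS) hX]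
  exact lintegral_congr fun ω ↦ Measure.map_apply hY (measurable_prodMk_left hS)

theorem ProbabilityTheory.iIndepFun.measure_forall_le {ι : Type*} [Fintype ι]
    {η : ι → Ω → ℝ} (h : iIndepFun η μ) (c : ι → ℝ) :
    μ {ω | ∀ i, η i ω ≤ c i} = ∏ i, μ {ω | η i ω ≤ c i} := by
  have hset : {ω | ∀ i, η i ω ≤ c i} = ⋂ i ∈ Finset.univ, η i ⁻¹' Set.Iic (c i) := by
    ext ω; simp
  rw [hset, h.measure_inter_preimage_eq_mul Finset.univ fun i _ ↦ measurableSet_Iic]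
  rfl

end

theorem Real.div_rpow_one_div_rpow_neg {r s u : ℝ} (hr : r ≠ 0) (hs : 0 ≤ s) (hu : 0 ≤ u) :
    (u / s ^ (1 / r)) ^ (-r) = u⁻¹ ^ r * s := by
  rw [rpow_neg (div_nonneg hu (rpow_nonneg hs _)), ← inv_rpow (div_nonneg hu (rpow_nonneg hs _)),
    inv_div, div_eq_mul_inv, mul_rpow (rpow_nonneg hs _) (inv_nonneg.2 hu), ← rpow_mul hs,
    one_div_mul_cancel hr, rpow_one, mul_comm]

theorem measure_forall_rpow_mul_le_of_frechet {Ω ι : Type*} [MeasurableSpace Ω] [Fintype ι]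
    {μ : Measure Ω} [IsProbabilityMeasure μ] {r : ℝ} (hr : r ≠ 0) {η : ι → Ω → ℝ}
    (hindep : iIndepFun η μ)
    (hη : ∀ i, ∀ u > (0 : ℝ), (μ {ω | η i ω ≤ u}).toReal = exp (-(u ^ (-r))))
    {u : ι → ℝ} (hu : ∀ i, 0 < u i) {s : ℝ} (hs : 0 ≤ s) :
    μ {ω | ∀ i, s ^ (1 / r) * η i ω ≤ u i}
      = ENNReal.ofReal (exp (-((∑ i, (u i)⁻¹ ^ r) * s))) := by
  rcases hs.eq_or_lt with rfl | hs
  · simp [zero_rpow (inv_ne_zero hr), fun i ↦ (hu i).le]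
  have hc : 0 < s ^ (1 / r) := rpow_pos_of_pos hs _
  have hcdf : ∀ i, μ {ω | η i ω ≤ u i / s ^ (1 / r)}
      = ENNReal.ofReal (exp (-((u i)⁻¹ ^ r * s))) := fun i ↦ by
    rw [← div_rpow_one_div_rpow_neg hr hs.le (hu i).le, ← hη i _ (div_pos (hu i) hc),
      ENNReal.ofReal_toReal (measure_ne_top _ _)]
  simp_rw [mul_comm (s ^ (1 / r)), ← le_div_iff₀ hc]
  rw [hindep.measure_forall_le, Finset.sum_mul, ← Finset.sum_neg_distrib, exp_sum,
    ENNReal.ofReal_prod_of_nonneg fun i _ ↦ (exp_pos _).le]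
  simp_rw [hcdf]

/-- If `η_1, …, η_d` are i.i.d. Fréchet(r) random variables (cdf `exp(−u^{−r})` on `(0,∞)`),
`ζ ≥ 0` is independent of them with Laplace transform `E[e^{−tζ}] = e^{−t^{1/r}}`, then
`X = ζ^{1/r}·(η_1,…,η_d)` has the logistic max-stable distribution
`P(X ≤ u) = exp(−‖u^{−1}‖_r)` for `u ∈ (0,∞)^d`. -/
theorem stmt13 {Ω : Type*} [MeasurableSpace Ω] (μ : Measure Ω) [IsProbabilityMeasure μ]
    (r : ℝ) (hr : 1 < r) (d : ℕ)
    (ζ : Ω → ℝ) (η : Fin d → Ω → ℝ)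
    (hζm : Measurable ζ) (hηm : ∀ i, Measurable (η i))
    (hζ0 : ∀ ω, 0 ≤ ζ ω)
    (hindep : iIndepFun η μ)
    (hζη : IndepFun ζ (fun ω i => η i ω) μ)
    (hη : ∀ i, ∀ u > (0 : ℝ), (μ {ω | η i ω ≤ u}).toReal = Real.exp (-(u ^ (-r))))
    (hζ : ∀ t ≥ (0 : ℝ), (∫ ω, Real.exp (-(t * ζ ω)) ∂μ) = Real.exp (-(t ^ (1 / r)))) :
    ∀ u : Fin d → ℝ, (∀ i, 0 < u i) →
      (μ {ω | ∀ i, ζ ω ^ (1 / r) * η i ω ≤ u i}).toReal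
        = Real.exp (-(∑ i, ((u i)⁻¹) ^ r) ^ (1 / r)) := by
  intro u hu
  set t := ∑ i, (u i)⁻¹ ^ r
  have ht : 0 ≤ t := Finset.sum_nonneg fun i _ ↦ rpow_nonneg (inv_nonneg.2 (hu i).le) _
  have hS : MeasurableSet {p : ℝ × (Fin d → ℝ) | ∀ i, p.1 ^ (1 / r) * p.2 i ≤ u i} := by
    simp only [Set.ofPred_forall]
    exact .iInter fun i ↦ measurableSet_le (by fun_prop) measurable_const
  have hcond := hζη.measure_prodMk_mem_eq_lintegral hζm (measurable_pi_lambda _ hηm) hS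
  simp only [Set.mem_ofPred_eq,
    measure_forall_rpow_mul_le_of_frechet (zero_lt_one.trans hr).ne' hindep hη hu (hζ0 _)] at hcond
  rw [hcond, ← integral_eq_lintegral_of_nonneg_ae (ae_of_all _ fun _ ↦ (exp_pos _).le)
    (by fun_prop), hζ t ht]
end

section
/- Let ξ_1, ξ_2 be i.i.d. nonnegative random variables with regularly varying tail F̄ of index −α (α > 0), let d = d(n) → ∞, and define a_n by the requirement (nd)·F̄(a_n) → 1 as n → ∞. Then for every ε > 0, n² · (1 − (1 − F̄(ε a_n)²)^d) → 0 as n → ∞. -/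
/-!
Bernoulli's inequality gives `1 - (1 - p)^d ≤ d p`, so the quantity is at most
`n² d T(ε aₙ)² = (n d T(aₙ))² · (T(ε aₙ) / T(aₙ))² / d`, where `T` is the tail of `ξ`.
The three factors tend to `1`, `ε^(-2α)` (regular variation) and `0`.
-/

open MeasureTheory Filter Topology

section Bernoulli

variable {R : Type*} [Ring R] [LinearOrder R] [IsStrictOrderedRing R] {p : R}

lemma one_sub_one_sub_pow_le_mul (hp : p ≤ 2) (d : ℕ) : 1 - (1 - p) ^ d ≤ d * p := by
  have h := one_add_mul_le_pow (neg_le_neg hp) d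
  rw [← sub_eq_add_neg, mul_neg, ← sub_eq_add_neg] at h
  exact sub_le_comm.1 h

lemma one_sub_one_sub_pow_nonneg (hp₀ : 0 ≤ p) (hp₁ : p ≤ 1) (d : ℕ) :
    0 ≤ 1 - (1 - p) ^ d :=
  sub_nonneg.2 (pow_le_one₀ (sub_nonneg.2 hp₁) (sub_le_self 1 hp₀))

end Bernoulli

lemma tendsto_sq_mul_mul_sq_zero_of_tendsto_div {ι : Type*} {l : Filter ι} {f g u v : ι → ℝ}
    {L c : ℝ} (hfgu : Tendsto (fun i => f i * g i * u i) l (𝓝 L))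
    (hvu : Tendsto (fun i => v i / u i) l (𝓝 c)) (hg : Tendsto g l atTop)
    (hu : ∀ᶠ i in l, u i ≠ 0) :
    Tendsto (fun i => f i ^ 2 * g i * v i ^ 2) l (𝓝 0) := by
  have h := ((hfgu.pow 2).mul (hvu.pow 2)).mul hg.inv_tendsto_atTop
  rw [mul_zero] at h
  refine h.congr' ?_
  filter_upwards [hu, hg.eventually_gt_atTop 0] with i hu hg
  simp only [Pi.inv_apply]
  field_simp

theorem stmt16_general {Ω : Type*} [MeasurableSpace Ω] (μ : Measure Ω) [IsProbabilityMeasure μ]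
    (ξ : Ω → ℝ)
    (α : ℝ)
    (hpos : ∀ᶠ t in atTop, 0 < (μ {ω | t < ξ ω}).toReal)
    (hreg : ∀ c > (0 : ℝ), Tendsto
      (fun t => (μ {ω | c * t < ξ ω}).toReal / (μ {ω | t < ξ ω}).toReal)
      atTop (nhds (c ^ (-α))))
    (d : ℕ → ℕ) (hd : Tendsto (fun n => (d n : ℝ)) atTop atTop)
    (a : ℕ → ℝ) (ha : Tendsto a atTop atTop)
    (han : Tendsto (fun n : ℕ => (n : ℝ) * (d n : ℝ) * (μ {ω | a n < ξ ω}).toReal)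
      atTop (nhds 1)) :
    ∀ ε > (0 : ℝ), Tendsto
      (fun n : ℕ => (n : ℝ) ^ 2 *
        (1 - (1 - (μ {ω | ε * a n < ξ ω}).toReal ^ 2) ^ (d n)))
      atTop (nhds 0) := by
  intro ε hε
  set T : ℝ → ℝ := fun t => (μ {ω | t < ξ ω}).toReal
  have hT₀ (t : ℝ) : 0 ≤ T t ^ 2 := sq_nonneg _
  have hT₁ (t : ℝ) : T t ^ 2 ≤ 1 := pow_le_one₀ measureReal_nonneg measureReal_le_one
  have hbound : Tendsto (fun n : ℕ => (n : ℝ) ^ 2 * d n * T (ε * a n) ^ 2) atTop (𝓝 0) :=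
    tendsto_sq_mul_mul_sq_zero_of_tendsto_div han ((hreg ε hε).comp ha) hd
      ((ha.eventually hpos).mono fun _ h => h.ne')
  refine squeeze_zero (fun n => mul_nonneg (sq_nonneg _)
    (one_sub_one_sub_pow_nonneg (hT₀ _) (hT₁ _) _)) (fun n => ?_) hbound
  rw [mul_assoc]
  exact mul_le_mul_of_nonneg_left
    (one_sub_one_sub_pow_le_mul ((hT₁ _).trans one_le_two) _) (sq_nonneg _)

/-- Let `ξ ≥ 0` have regularly varying tail `T(t) = P(ξ > t)` of index `−α` (`α > 0`),
let `d = d(n) → ∞`, and let `a_n → ∞` satisfy `n·d(n)·T(a_n) → 1`. Then for every `ε > 0`,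
`n² · (1 − (1 − T(ε a_n)²)^{d(n)}) → 0` as `n → ∞`. -/
theorem stmt16 {Ω : Type*} [MeasurableSpace Ω] (μ : Measure Ω) [IsProbabilityMeasure μ]
    (ξ : Ω → ℝ) (hmeas : Measurable ξ) (hnonneg : ∀ ω, 0 ≤ ξ ω)
    (α : ℝ) (hα : 0 < α)
    (hpos : ∀ᶠ t in atTop, 0 < (μ {ω | t < ξ ω}).toReal)
    (hreg : ∀ c > (0 : ℝ), Tendsto
      (fun t => (μ {ω | c * t < ξ ω}).toReal / (μ {ω | t < ξ ω}).toReal)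
      atTop (nhds (c ^ (-α))))
    (d : ℕ → ℕ) (hd : Tendsto (fun n => (d n : ℝ)) atTop atTop)
    (a : ℕ → ℝ) (ha : Tendsto a atTop atTop)
    (han : Tendsto (fun n : ℕ => (n : ℝ) * (d n : ℝ) * (μ {ω | a n < ξ ω}).toReal)
      atTop (nhds 1)) :
    ∀ ε > (0 : ℝ), Tendsto
      (fun n : ℕ => (n : ℝ) ^ 2 *
        (1 - (1 - (μ {ω | ε * a n < ξ ω}).toReal ^ 2) ^ (d n)))
      atTop (nhds 0) :=
  stmt16_general μ ξ α hpos hreg d hd a ha han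
end

section
/- Let γ ∈ (0,1) and θ_1, …, θ_{m+1} > 0. Define p_{n₁,…,n_k} = (Σ_{i=1}^k θ_i)^γ π^{(k)}_{n₁,…,n_k}, where π^{(k)} is the multivariate Sibuya distribution with index γ and weights q_i = θ_i/Σ_{j≤k} θ_j. Then the family is consistent: for every multi-index (n₁,…,n_m) with at least one positive entry, p_{n₁,…,n_m} = Σ_{k=0}^∞ p_{n₁,…,n_m,k}. -/
/-!
Substituting `z_{m+1} = 1` in the generating function of `π^{(m+1)}` sums out the last coordinate.
Give `π^{(m)}` and `π^{(m+1)}` the coefficient `-1` at `z^0`; then, with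
`T(z) = ∑_{i ≤ m} (1 - z_i) θ_i`, the marginal scaled by `(∑_{i ≤ m+1} θ_i)^γ` and `π^{(m)}` scaled
by `(∑_{i ≤ m} θ_i)^γ` both have generating function `-T(z)^γ`. Coefficients of a power series
with summable coefficients are determined by its values on `(0,1]^m`: for one variable by
continuity at `0` and division by `t`, in general by induction on the number of variables.
-/

open Finset Set

lemma prod_pow_mem_Icc {ι : Type*} [Fintype ι] {z : ι → ℝ} (hz : ∀ i, z i ∈ Icc (0 : ℝ) 1)
    (n : ι → ℕ) : ∏ i, z i ^ n i ∈ Icc (0 : ℝ) 1 :=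
  ⟨prod_nonneg fun i _ => pow_nonneg (hz i).1 _,
    prod_le_one (fun i _ => pow_nonneg (hz i).1 _) fun i _ => pow_le_one₀ (hz i).1 (hz i).2⟩

lemma Summable.mul_prod_pow {ι : Type*} [Fintype ι] {a : (ι → ℕ) → ℝ} (ha : Summable a)
    {z : ι → ℝ} (hz : ∀ i, z i ∈ Icc (0 : ℝ) 1) :
    Summable fun n => a n * ∏ i, z i ^ n i := by
  refine ha.abs.of_norm_bounded fun n => ?_
  obtain ⟨h0, h1⟩ := prod_pow_mem_Icc hz n
  rw [Real.norm_eq_abs, abs_mul, abs_of_nonneg h0]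
  exact mul_le_of_le_one_right (abs_nonneg _) h1

lemma Fin.prod_snoc_pow_snoc {M : Type*} [CommMonoid M] {m : ℕ} (z : Fin m → M) (t : M)
    (n : Fin m → ℕ) (k : ℕ) :
    ∏ i, (Fin.snoc z t : Fin (m + 1) → M) i ^ (Fin.snoc n k : Fin (m + 1) → ℕ) i =
      (∏ i, z i ^ n i) * t ^ k := by
  simp [Fin.prod_univ_castSucc]

lemma Fin.snoc_mem {α : Type*} {m : ℕ} {s : Set α} {z : Fin m → α} {t : α}
    (hz : ∀ i, z i ∈ s) (ht : t ∈ s) (i : Fin (m + 1)) : (Fin.snoc z t : Fin (m + 1) → α) i ∈ s :=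
  Fin.lastCases (by simpa using ht) (fun j => by simpa using hz j) i

section Fiberwise

variable {E β : Type*} [NormedAddCommGroup E] [CompleteSpace E] {m : ℕ}
  {f : (Fin (m + 1) → β) → E} {s : E}

lemma HasSum.fiberwise_last (hf : HasSum f s) : HasSum (fun k => ∑' n, f (Fin.snoc n k)) s := by
  have h := (Fin.snocEquiv fun _ => β).hasSum_iff.2 hf
  exact h.prod_fiberwise fun k => (h.summable.prod_factor k).hasSum

lemma HasSum.fiberwise_init (hf : HasSum f s) : HasSum (fun n => ∑' k, f (Fin.snoc n k)) s := by
  have h := ((Equiv.prodComm _ _).trans (Fin.snocEquiv fun _ => β)).hasSum_iff.2 hf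
  exact h.prod_fiberwise fun n => (h.summable.prod_factor n).hasSum

end Fiberwise

lemma HasSum.fiberwise_init_mul_prod_pow {m : ℕ} {p : (Fin (m + 1) → ℕ) → ℝ} {z : Fin m → ℝ}
    {s : ℝ} (h : HasSum (fun x => p x * ∏ i, (Fin.snoc z 1 : Fin (m + 1) → ℝ) i ^ x i) s) :
    HasSum (fun n => (∑' k, p (Fin.snoc n k)) * ∏ i, z i ^ n i) s := by
  simpa only [Fin.prod_snoc_pow_snoc, one_pow, mul_one, tsum_mul_right] using h.fiberwise_init

lemma coeff_zero_eq_zero_of_hasSum_mul_pow {a : ℕ → ℝ}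
    (h : ∀ t ∈ Ioc (0 : ℝ) 1, HasSum (fun k => a k * t ^ k) 0) : a 0 = 0 := by
  have ha : Summable a := by simpa using (h 1 ⟨one_pos, le_rfl⟩).summable
  have hcont : ContinuousOn (fun t => ∑' k, a k * t ^ k) (Icc 0 1) := by
    refine continuousOn_tsum (fun k => by fun_prop) ha.abs fun k t ht => ?_
    rw [Real.norm_eq_abs, abs_mul, abs_pow, abs_of_nonneg ht.1]
    exact mul_le_of_le_one_right (abs_nonneg _) (pow_le_one₀ ht.1 ht.2)
  have hzero : EqOn (fun t => ∑' k, a k * t ^ k) 0 (Icc 0 1) :=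
    EqOn.of_subset_closure (fun t ht => (h t ht).tsum_eq) hcont continuousOn_const
      Ioc_subset_Icc_self (closure_Ioc zero_ne_one).ge
  have h0 : ∑' k, a k * 0 ^ k = 0 := hzero (left_mem_Icc.2 zero_le_one)
  rwa [tsum_eq_single 0 fun k hk => by simp [hk], pow_zero, mul_one] at h0

lemma HasSum.mul_pow_succ_of_coeff_zero {a : ℕ → ℝ} {t : ℝ} (ht : t ≠ 0)
    (h : HasSum (fun k => a k * t ^ k) 0) (h0 : a 0 = 0) :
    HasSum (fun k => a (k + 1) * t ^ k) 0 := by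
  have h1 := ((hasSum_nat_add_iff' 1).2 h).mul_right t⁻¹
  simpa [h0, pow_succ, mul_assoc, ht] using h1

theorem eq_zero_of_hasSum_mul_pow {a : ℕ → ℝ}
    (h : ∀ t ∈ Ioc (0 : ℝ) 1, HasSum (fun k => a k * t ^ k) 0) : a = 0 := by
  funext j
  induction j generalizing a with
  | zero => exact coeff_zero_eq_zero_of_hasSum_mul_pow h
  | succ j ih =>
    exact ih fun t ht =>
      (h t ht).mul_pow_succ_of_coeff_zero ht.1.ne' (coeff_zero_eq_zero_of_hasSum_mul_pow h)

theorem eq_zero_of_hasSum_mul_prod_pow {m : ℕ} {a : (Fin m → ℕ) → ℝ}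
    (h : ∀ z : Fin m → ℝ, (∀ i, z i ∈ Ioc (0 : ℝ) 1) →
      HasSum (fun n => a n * ∏ i, z i ^ n i) 0) : a = 0 := by
  induction m with
  | zero =>
    funext n
    have h0 := (h Fin.elim0 finZeroElim).unique
      (hasSum_single n fun n' hn' => absurd (Subsingleton.elim n' n) hn')
    simpa using h0.symm
  | succ m ih =>
    have ha : Summable a := by simpa using (h 1 fun _ => ⟨one_pos, le_rfl⟩).summable
    have hfiber : ∀ z : Fin m → ℝ, (∀ i, z i ∈ Ioc (0 : ℝ) 1) →
        (fun k => ∑' n, a (Fin.snoc n k) * ∏ i, z i ^ n i) = 0 := by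
      intro z hz
      refine eq_zero_of_hasSum_mul_pow fun t ht => ?_
      have := (h (Fin.snoc z t) (Fin.snoc_mem hz ht)).fiberwise_last
      simpa only [Fin.prod_snoc_pow_snoc, ← mul_assoc, tsum_mul_right] using this
    have hslice : ∀ k, (fun n => a (Fin.snoc n k)) = 0 := fun k => ih fun z hz => by
      have hk : Summable fun n => a (Fin.snoc n k) :=
        ha.comp_injective (Fin.snoc_left_injective (α := fun _ => ℕ) k)
      have hsum := (hk.mul_prod_pow fun i => Ioc_subset_Icc_self (hz i)).hasSum
      rwa [congrFun (hfiber z hz) k] at hsum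
    funext x
    simpa using congrFun (hslice (x (Fin.last m))) (Fin.init x)

theorem eq_of_hasSum_mul_prod_pow {m : ℕ} {a b : (Fin m → ℕ) → ℝ} {s : (Fin m → ℝ) → ℝ}
    (ha : ∀ z : Fin m → ℝ, (∀ i, z i ∈ Ioc (0 : ℝ) 1) →
      HasSum (fun n => a n * ∏ i, z i ^ n i) (s z))
    (hb : ∀ z : Fin m → ℝ, (∀ i, z i ∈ Ioc (0 : ℝ) 1) →
      HasSum (fun n => b n * ∏ i, z i ^ n i) (s z)) : a = b :=
  sub_eq_zero.1 <| eq_zero_of_hasSum_mul_prod_pow fun z hz => by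
    simpa only [Pi.sub_apply, sub_mul, sub_self] using (ha z hz).sub (hb z hz)

lemma HasSum.update_zero_mul_prod_pow {ι : Type*} [Fintype ι] {p : (ι → ℕ) → ℝ} {z : ι → ℝ}
    {c : ℝ} (h : HasSum (fun n : {n : ι → ℕ // n ≠ 0} => p n * ∏ i, z i ^ n.1 i) (1 - c)) :
    HasSum (fun n => Function.update p 0 (-1) n * ∏ i, z i ^ n i) (-c) := by
  have h' := ((hasSum_subtype_iff_indicator
    (f := fun n => p n * ∏ i, z i ^ n i) (s := {n | n ≠ 0})).1 h).update 0 (-1)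
  have hp : (fun n => Function.update p 0 (-1) n * ∏ i, z i ^ n i) =
      Function.update ({n | n ≠ 0}.indicator fun n => p n * ∏ i, z i ^ n i) 0 (-1) := by
    funext n
    by_cases hn : n = 0 <;> simp [hn]
  rwa [hp, show -c = -1 - {n | n ≠ 0}.indicator (fun n => p n * ∏ i, z i ^ n i) 0 + (1 - c) by
    simp only [ne_eq, mem_ofPred_eq, not_true_eq_false, not_false_eq_true, indicator_of_notMem]
    ring]

lemma rpow_mul_sum_mul_div_rpow {ι : Type*} (s : Finset ι) {w θ : ι → ℝ}
    (hw : ∀ i ∈ s, 0 ≤ w i) (hθ : ∀ i ∈ s, 0 ≤ θ i) {S : ℝ} (hS : 0 < S) (γ : ℝ) :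
    S ^ γ * (∑ i ∈ s, w i * (θ i / S)) ^ γ = (∑ i ∈ s, w i * θ i) ^ γ := by
  simp_rw [← mul_div_assoc, ← sum_div]
  rw [Real.div_rpow (sum_nonneg fun i hi => mul_nonneg (hw i hi) (hθ i hi)) hS.le,
    mul_div_cancel₀ _ (Real.rpow_pos_of_pos hS γ).ne']

lemma HasSum.rpow_mul_update_zero_mul_prod_pow {ι : Type*} [Fintype ι] {p : (ι → ℕ) → ℝ}
    {z θ : ι → ℝ} {S γ : ℝ} (hz : ∀ i, z i ≤ 1) (hθ : ∀ i, 0 ≤ θ i) (hS : 0 < S)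
    (h : HasSum (fun n : {n : ι → ℕ // n ≠ 0} => p n * ∏ i, z i ^ n.1 i)
      (1 - (∑ i, (1 - z i) * (θ i / S)) ^ γ)) :
    HasSum (fun n => S ^ γ * Function.update p 0 (-1) n * ∏ i, z i ^ n i)
      (-(∑ i, (1 - z i) * θ i) ^ γ) := by
  have h' := h.update_zero_mul_prod_pow.mul_left (S ^ γ)
  rw [mul_neg, rpow_mul_sum_mul_div_rpow _ (fun i _ => sub_nonneg.2 (hz i))
    (fun i _ => hθ i) hS] at h'
  simpa only [mul_assoc] using h'

theorem stmt18_general (m : ℕ) (γ : ℝ)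
    (θ : Fin (m + 1) → ℝ) (hθ : ∀ i, 0 < θ i)
    (πm : (Fin m → ℕ) → ℝ) (πm1 : (Fin (m + 1) → ℕ) → ℝ)
    (hπm : ∀ z : Fin m → ℝ, (∀ i, z i ∈ Set.Icc (0 : ℝ) 1) →
      HasSum (fun n : {n : Fin m → ℕ // n ≠ 0} => πm n.1 * ∏ i, z i ^ n.1 i)
        (1 - (∑ i, (1 - z i) * (θ i.castSucc / ∑ j : Fin m, θ j.castSucc)) ^ γ))
    (hπm1 : ∀ z : Fin (m + 1) → ℝ, (∀ i, z i ∈ Set.Icc (0 : ℝ) 1) →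
      HasSum (fun n : {n : Fin (m + 1) → ℕ // n ≠ 0} => πm1 n.1 * ∏ i, z i ^ n.1 i)
        (1 - (∑ i, (1 - z i) * (θ i / ∑ j, θ j)) ^ γ)) :
    ∀ n : Fin m → ℕ, n ≠ 0 →
      HasSum (fun k : ℕ => (∑ j, θ j) ^ γ * πm1 (Fin.snoc n k))
        ((∑ j : Fin m, θ j.castSucc) ^ γ * πm n) := by
  intro n hn
  obtain _ | m := m
  · exact absurd (Subsingleton.elim n 0) hn
  set S := ∑ j, θ j
  set S' := ∑ j : Fin (m + 1), θ j.castSucc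
  have hS : 0 < S := sum_pos (fun i _ => hθ i) univ_nonempty
  have hS' : 0 < S' := sum_pos (fun i _ => hθ _) univ_nonempty
  set p := Function.update πm1 0 (-1)
  set p' := Function.update πm 0 (-1)
  have hcoeff : (fun n => ∑' k, S ^ γ * p (Fin.snoc n k)) = fun n => S' ^ γ * p' n := by
    refine eq_of_hasSum_mul_prod_pow (s := fun z => -(∑ i, (1 - z i) * θ i.castSucc) ^ γ)
      (fun z hz => ?_) (fun z hz => ?_)
    · have hz' := Fin.snoc_mem (fun i => Ioc_subset_Icc_self (hz i)) (right_mem_Icc.2 zero_le_one)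
      have h := ((hπm1 _ hz').rpow_mul_update_zero_mul_prod_pow (fun i => (hz' i).2)
        (fun i => (hθ i).le) hS).fiberwise_init_mul_prod_pow
      simpa only [Fin.sum_univ_castSucc (n := m + 1), Fin.snoc_castSucc, Fin.snoc_last, sub_self,
        zero_mul, add_zero] using h
    · exact (hπm z fun i => Ioc_subset_Icc_self (hz i)).rpow_mul_update_zero_mul_prod_pow
        (fun i => (hz i).2) (fun i => (hθ _).le) hS'
  have hsum : Summable p := by
    simpa using (hπm1 1 fun _ => ⟨zero_le_one, le_rfl⟩).update_zero_mul_prod_pow.summable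
  have hfiber : HasSum (fun k => S ^ γ * p (Fin.snoc n k)) (∑' k, S ^ γ * p (Fin.snoc n k)) :=
    ((hsum.comp_injective (Fin.snoc_right_injective (α := fun _ => ℕ) n)).mul_left _).hasSum
  have hsnoc : ∀ k, (Fin.snoc n k : Fin (m + 2) → ℕ) ≠ 0 := fun k h0 =>
    hn (funext fun i => by simpa using congrFun h0 i.castSucc)
  rw [congrFun hcoeff n] at hfiber
  simpa [p, p', Function.update_apply, hsnoc, hn] using hfiber

/-- Consistency of the family `p_{n_1,…,n_k} = (∑_{i≤k} θ_i)^γ · π^{(k)}_{n_1,…,n_k}`,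
where `π^{(k)}` is the multivariate Sibuya distribution with index `γ ∈ (0,1)` and weights
`q_i = θ_i / ∑_{j≤k} θ_j`, characterized by its generating function: for every nonzero
multi-index `(n_1,…,n_m)`, one has `p_{n_1,…,n_m} = ∑_{k=0}^∞ p_{n_1,…,n_m,k}`. -/
theorem stmt18 (m : ℕ) (γ : ℝ) (hγ : γ ∈ Set.Ioo (0 : ℝ) 1)
    (θ : Fin (m + 1) → ℝ) (hθ : ∀ i, 0 < θ i)
    (πm : (Fin m → ℕ) → ℝ) (πm1 : (Fin (m + 1) → ℕ) → ℝ)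
    (hπm : ∀ z : Fin m → ℝ, (∀ i, z i ∈ Set.Icc (0 : ℝ) 1) →
      HasSum (fun n : {n : Fin m → ℕ // n ≠ 0} => πm n.1 * ∏ i, z i ^ n.1 i)
        (1 - (∑ i, (1 - z i) * (θ i.castSucc / ∑ j : Fin m, θ j.castSucc)) ^ γ))
    (hπm1 : ∀ z : Fin (m + 1) → ℝ, (∀ i, z i ∈ Set.Icc (0 : ℝ) 1) →
      HasSum (fun n : {n : Fin (m + 1) → ℕ // n ≠ 0} => πm1 n.1 * ∏ i, z i ^ n.1 i)
        (1 - (∑ i, (1 - z i) * (θ i / ∑ j, θ j)) ^ γ)) :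
    ∀ n : Fin m → ℕ, n ≠ 0 →
      HasSum (fun k : ℕ => (∑ j, θ j) ^ γ * πm1 (Fin.snoc n k))
        ((∑ j : Fin m, θ j.castSucc) ^ γ * πm n) :=
  stmt18_general m γ θ hθ πm πm1 hπm hπm1
end
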